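/- Let σ, τ be involutions in S_{±n} commuting with negation (i.e., elements of the hyperoctahedral group realized as permutations of {1,…,n,−n,…,−1}). Let R_σ be the 2n×2n matrix whose (i,j) entry is the number of k with k weakly below row i and σ(k) weakly left of column j (rows/columns ordered 1,…,n,−n,…,−1), and R*_σ its strictly lower-triangular part. Then R_σ ≤ R_τ entrywise if and only if R*_σ ≤ R*_τ entrywise. -/
import Mathlib


/-- The rank matrix of a permutation of `Fin m`: `(R σ) i j = #{k ≥ i : σ k ≤ j}`. -/
def rankMat {m : ℕ} (σ : Equiv.Perm (Fin m)) : Matrix (Fin m) (Fin m) ℕ :=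
  fun i j => (Finset.univ.filter (fun k : Fin m => i ≤ k ∧ σ k ≤ j)).card

/-- The strictly lower-triangular part of the rank matrix. -/
def rankMatStar {m : ℕ} (σ : Equiv.Perm (Fin m)) : Matrix (Fin m) (Fin m) ℕ :=
  fun i j => if j < i then rankMat σ i j else 0

lemma card_sigma_le {m : ℕ} (σ : Equiv.Perm (Fin m)) (j : Fin m) :
    (Finset.univ.filter (fun k : Fin m => σ k ≤ j)).card = (j : ℕ) + 1 := by
  have : (Finset.univ.filter (fun k : Fin m => σ k ≤ j)) = (Finset.Iic j).image σ.symm := by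
    ext k
    simp [Finset.mem_image]
    constructor
    · intro h; exact ⟨σ k, h, σ.symm_apply_apply k⟩
    · rintro ⟨y, hy, rfl⟩; simpa using hy
  rw [this, Finset.card_image_of_injective _ σ.symm.injective, Fin.card_Iic]

lemma rank_key {m : ℕ} (σ : Equiv.Perm (Fin m)) (i j : Fin m) :
    rankMat σ i j + (i : ℕ)
      = (j : ℕ) + 1 + (Finset.univ.filter (fun k : Fin m => k < i ∧ j < σ k)).card := by
  have h1 : (Finset.univ.filter (fun k : Fin m => k < i ∧ σ k ≤ j)).card + rankMat σ i j
      = (j : ℕ) + 1 := by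
    simp only [rankMat]
    rw [← card_sigma_le σ j, ← Finset.card_union_of_disjoint]
    · congr 1
      ext k
      simp only [Finset.mem_union, Finset.mem_filter, Finset.mem_univ, true_and]
      constructor
      · rintro (⟨_, h⟩ | ⟨_, h⟩) <;> exact h
      · intro h; rcases lt_or_ge k i with hk | hk
        · exact Or.inl ⟨hk, h⟩
        · exact Or.inr ⟨hk, h⟩
    · rw [Finset.disjoint_left]
      intro a ha hb
      simp only [Finset.mem_filter] at ha hb
      exact absurd hb.2.1 (not_le.mpr ha.2.1)
  have h2 : (Finset.univ.filter (fun k : Fin m => k < i ∧ σ k ≤ j)).card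
      + (Finset.univ.filter (fun k : Fin m => k < i ∧ j < σ k)).card = (i : ℕ) := by
    rw [← Finset.card_union_of_disjoint]
    · have : (Finset.univ.filter (fun k : Fin m => k < i ∧ σ k ≤ j)) ∪
          (Finset.univ.filter (fun k : Fin m => k < i ∧ j < σ k))
          = Finset.Iio i := by
        ext k
        simp only [Finset.mem_union, Finset.mem_filter, Finset.mem_univ, true_and,
          Finset.mem_Iio]
        constructor
        · rintro (⟨h, _⟩ | ⟨h, _⟩) <;> exact h
        · intro h; rcases le_or_gt (σ k) j with hk | hk
          · exact Or.inl ⟨h, hk⟩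
          · exact Or.inr ⟨h, hk⟩
      rw [this, Fin.card_Iio]
    · rw [Finset.disjoint_left]
      intro a ha hb
      simp only [Finset.mem_filter] at ha hb
      exact absurd hb.2.2 (not_lt.mpr ha.2.2)
  omega

lemma count_rev {m : ℕ} (σ : Equiv.Perm (Fin m))
    (hσneg : ∀ k : Fin m, σ k.rev = (σ k).rev) (i j : Fin m) :
    (Finset.univ.filter (fun k : Fin m => k < i ∧ j < σ k)).card
      = (Finset.univ.filter (fun k : Fin m => i.rev < k ∧ σ k < j.rev)).card := by
  refine Finset.card_bij' (fun k _ => k.rev) (fun k _ => k.rev) ?_ ?_ ?_ ?_ <;>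
    intro k hk <;>
    simp only [Finset.mem_filter, Finset.mem_univ, true_and, Fin.rev_rev] at hk ⊢
  · rw [hσneg]
    exact ⟨Fin.rev_lt_rev.mpr hk.1, Fin.rev_lt_rev.mpr hk.2⟩
  · refine ⟨?_, ?_⟩
    · rw [← Fin.rev_lt_rev, Fin.rev_rev]; exact hk.1
    · rw [hσneg]; simpa using Fin.rev_lt_rev.mpr hk.2

/-- `σ, τ` are involutions in `S_{±n}` commuting with negation, where the index set
`{1,…,n,−n,…,−1}` is identified with `Fin (2n)` via its linear ordering, under which
negation becomes `Fin.rev`. -/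
theorem stmt12 (n : ℕ) (σ τ : Equiv.Perm (Fin (2 * n)))
    (hσneg : ∀ k : Fin (2 * n), σ k.rev = (σ k).rev)
    (hτneg : ∀ k : Fin (2 * n), τ k.rev = (τ k).rev)
    (hσ : σ * σ = 1) (hτ : τ * τ = 1) :
    (∀ i j : Fin (2 * n), rankMat σ i j ≤ rankMat τ i j) ↔
      (∀ i j : Fin (2 * n), rankMatStar σ i j ≤ rankMatStar τ i j) := by
  constructor
  · intro h i j
    unfold rankMatStar
    split
    · exact h i j
    · exact le_rfl
  · intro h i j
    rcases lt_or_ge j i with hji | hij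
    · have := h i j
      simpa [rankMatStar, hji] using this
    · -- i ≤ j
      have key : (Finset.univ.filter (fun k : Fin (2*n) => k < i ∧ j < σ k)).card
          ≤ (Finset.univ.filter (fun k : Fin (2*n) => k < i ∧ j < τ k)).card := by
        by_cases hi0 : (i : ℕ) = 0
        · have : (Finset.univ.filter (fun k : Fin (2*n) => k < i ∧ j < σ k)) = ∅ := by
            ext k; simp only [Finset.mem_filter, Finset.notMem_empty, iff_false]
            rintro ⟨_, hk, _⟩
            exact absurd hk (by rw [Fin.lt_def]; omega)
          rw [this]; exact Nat.zero_le _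
        · by_cases hjl : (j : ℕ) = 2*n - 1
          · have : (Finset.univ.filter (fun k : Fin (2*n) => k < i ∧ j < σ k)) = ∅ := by
              ext k; simp only [Finset.mem_filter, Finset.notMem_empty, iff_false]
              rintro ⟨_, _, hk⟩
              rw [Fin.lt_def] at hk
              have := (σ k).isLt
              omega
            rw [this]; exact Nat.zero_le _
          · have him := i.isLt
            have hjm := j.isLt
            have hrevi : (i.rev : ℕ) = 2*n - 1 - i := by simp [Fin.rev]; omega
            have hrevj : (j.rev : ℕ) = 2*n - 1 - j := by simp [Fin.rev]; omega
            set i' : Fin (2*n) := ⟨(i.rev : ℕ) + 1, by omega⟩ with hi'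
            set j' : Fin (2*n) := ⟨(j.rev : ℕ) - 1, by omega⟩ with hj'
            have hset : ∀ ρ : Equiv.Perm (Fin (2*n)),
                Finset.univ.filter (fun k : Fin (2*n) => i.rev < k ∧ ρ k < j.rev)
                = Finset.univ.filter (fun k : Fin (2*n) => i' ≤ k ∧ ρ k ≤ j') := by
              intro ρ
              ext k
              simp only [Finset.mem_filter, Finset.mem_univ, true_and, Fin.lt_def,
                Fin.le_def, hi', hj']
              constructor <;> intro hk <;> constructor <;> omega
            rw [count_rev σ hσneg, count_rev τ hτneg, hset σ, hset τ]
            have hji' : j' < i' := by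
              rw [Fin.lt_def]
              have : (i : ℕ) ≤ j := hij
              simp only [hi', hj']
              omega
            have := h i' j'
            simpa [rankMatStar, hji', rankMat] using this
      have k1 := rank_key σ i j
      have k2 := rank_key τ i j
      omega
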